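/- arXiv:1512.02457 — 3 statements merged into one kernel-verified Lean document; each statement's English description precedes it below -/
import Mathlib

section
/- Let a and a' be left-box inputs, let P be a nonempty proper subset of U_a and Q a nonempty proper subset of U_{a'}. Then [a∈P,𝟙] and [a'∈Q,𝟙] are compatible if and only if a = a'. -/
namespace Box

variable {N M : ℕ}

/-- The atom `[aα, bβ] = {(x, y) ∈ Γ : x_a = α ∧ y_b = β}`. -/
def atom {U : Fin N → Type} {V : Fin M → Type} (a : Fin N) (α : U a)
    (b : Fin M) (β : V b) : Set ((∀ i, U i) × (∀ j, V j)) :=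
  {p | p.1 a = α ∧ p.2 b = β}

/-- `ℒ`: the smallest family of subsets of `Γ` containing the empty set and
every atom, closed under complementation and under unions of finite families
of pairwise disjoint members. -/
inductive Logic (U : Fin N → Type) (V : Fin M → Type) :
    Set ((∀ i, U i) × (∀ j, V j)) → Prop
  | empty : Logic U V ∅
  | atom (a : Fin N) (α : U a) (b : Fin M) (β : V b) :
      Logic U V (Box.atom a α b β)
  | compl (s : Set ((∀ i, U i) × (∀ j, V j))) (hs : Logic U V s) :
      Logic U V sᶜ
  | iUnion (n : ℕ) (f : Fin n → Set ((∀ i, U i) × (∀ j, V j)))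
      (hf : ∀ i, Logic U V (f i))
      (hd : ∀ i j, i ≠ j → Disjoint (f i) (f j)) :
      Logic U V (⋃ i, f i)

/-- The localized element `[a∈P, 𝟙] = {(x, y) ∈ Γ : x_a ∈ P}`. -/
def locL (U : Fin N → Type) (V : Fin M → Type) (a : Fin N) (P : Set (U a)) :
    Set ((∀ i, U i) × (∀ j, V j)) := {p | p.1 a ∈ P}

/-- The localized element `[𝟙, b∈Q] = {(x, y) ∈ Γ : y_b ∈ Q}`. -/
def locR (U : Fin N → Type) (V : Fin M → Type) (b : Fin M) (Q : Set (V b)) :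
    Set ((∀ i, U i) × (∀ j, V j)) := {p | p.2 b ∈ Q}

/-- A state on `ℒ`: a map `ρ : ℒ → [0,1]` with `ρ(Γ) = 1` which is additive on
finite families of pairwise disjoint members of `ℒ` whose union lies in `ℒ`. -/
structure State (U : Fin N → Type) (V : Fin M → Type) where
  val : Set ((∀ i, U i) × (∀ j, V j)) → ℝ
  nonneg : ∀ s, Logic U V s → 0 ≤ val s
  le_one : ∀ s, Logic U V s → val s ≤ 1
  normalized : val Set.univ = 1
  additive : ∀ (n : ℕ) (f : Fin n → Set ((∀ i, U i) × (∀ j, V j))),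
    (∀ i, Logic U V (f i)) → (∀ i j, i ≠ j → Disjoint (f i) (f j)) →
    Logic U V (⋃ i, f i) → val (⋃ i, f i) = ∑ i, val (f i)

/-- A PR-state: nonnegative, normalized for every pair of inputs, and
satisfying the two non-signalling conditions. `val a b α β = P(αβ | ab)`. -/
structure PRState (U : Fin N → Type) (V : Fin M → Type)
    [∀ a, Fintype (U a)] [∀ b, Fintype (V b)] where
  val : ∀ (a : Fin N) (b : Fin M), U a → V b → ℝ
  nonneg : ∀ a b α β, 0 ≤ val a b α β
  normalized : ∀ a b, ∑ α, ∑ β, val a b α β = 1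
  nonsig_left : ∀ (a c : Fin N) (b : Fin M) (β : V b),
    ∑ α, val a b α β = ∑ α, val c b α β
  nonsig_right : ∀ (a : Fin N) (b c : Fin M) (α : U a),
    ∑ β, val a b α β = ∑ β, val a c α β

/-- `p, q ∈ ℒ` are compatible when there are pairwise disjoint
`p₁, q₁, r ∈ ℒ` with `p = p₁ ∪ r` and `q = q₁ ∪ r`. -/
def Compatible (U : Fin N → Type) (V : Fin M → Type)
    (p q : Set ((∀ i, U i) × (∀ j, V j))) : Prop :=
  ∃ p₁ q₁ r, Logic U V p₁ ∧ Logic U V q₁ ∧ Logic U V r ∧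
    Disjoint p₁ q₁ ∧ Disjoint p₁ r ∧ Disjoint q₁ r ∧
    p = p₁ ∪ r ∧ q = q₁ ∪ r

end Box


section Aux

open Finset

private lemma sum_coord_zero' {N : ℕ} {U : Fin N → Type} [∀ i, Fintype (U i)]
    [∀ i, Nonempty (U i)]
    (c : Fin N) (F : U c → ℝ) (hF : ∑ γ, F γ = 0)
    (W : (∀ i, U i) → ℝ)
    (hW : ∀ x y : ∀ i, U i, (∀ i, i ≠ c → x i = y i) → W x = W y) :
    ∑ x : ∀ i, U i, F (x c) * W x = 0 := by
  classical
  let e := Equiv.piSplitAt c U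
  rw [← Equiv.sum_comp e.symm (fun x => F (x c) * W x)]
  rw [Fintype.sum_prod_type]
  have hc : ∀ (γ : U c) (z), (e.symm (γ, z)) c = γ := fun γ z =>
    congrArg Prod.fst (e.apply_symm_apply (γ, z))
  rw [Finset.sum_comm]
  apply Finset.sum_eq_zero
  intro z _
  obtain ⟨γ₀⟩ : Nonempty (U c) := inferInstance
  have hWz : ∀ γ : U c, W (e.symm (γ, z)) = W (e.symm (γ₀, z)) := by
    intro γ
    apply hW
    intro i hi
    simp [e, Equiv.piSplitAt, dif_neg hi]
  calc ∑ γ : U c, F ((e.symm (γ, z)) c) * W (e.symm (γ, z))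
      = ∑ γ : U c, F γ * W (e.symm (γ₀, z)) := by
        refine Finset.sum_congr rfl fun γ _ => ?_; rw [hc, hWz]
    _ = (∑ γ : U c, F γ) * W (e.symm (γ₀, z)) := by rw [Finset.sum_mul]
    _ = 0 := by rw [hF, zero_mul]

private lemma sum_left_zero {N : ℕ} {U : Fin N → Type} [∀ i, Fintype (U i)]
    [∀ i, Nonempty (U i)]
    {a a' : Fin N} (haa : a ≠ a') (u : U a → ℝ) (v : U a' → ℝ)
    (hu : ∑ γ, u γ = 0) (hv : ∑ γ, v γ = 0)
    (g : (∀ i, U i) → ℝ)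
    (hg : (∀ x y : ∀ i, U i, (∀ i, i ≠ a → x i = y i) → g x = g y) ∨
          (∀ x y : ∀ i, U i, (∀ i, i ≠ a' → x i = y i) → g x = g y)) :
    ∑ x : ∀ i, U i, u (x a) * v (x a') * g x = 0 := by
  classical
  rcases hg with hg | hg
  · have := sum_coord_zero' a u hu (fun x => v (x a') * g x) ?_
    · rw [← this]; exact Finset.sum_congr rfl fun x _ => by ring
    · intro x y h
      rw [h a' (Ne.symm haa), hg x y h]
  · have := sum_coord_zero' a' v hv (fun x => u (x a) * g x) ?_
    · rw [← this]; exact Finset.sum_congr rfl fun x _ => by ring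
    · intro x y h
      rw [h a haa, hg x y h]

private lemma mu_logic_zero {N M : ℕ} {U : Fin N → Type} {V : Fin M → Type}
    [∀ i, Fintype (U i)] [∀ j, Fintype (V j)]
    [∀ i, Nonempty (U i)]
    {a a' : Fin N} (haa : a ≠ a') (u : U a → ℝ) (v : U a' → ℝ)
    (hu : ∑ γ, u γ = 0) (hv : ∑ γ, v γ = 0)
    (s : Set ((∀ i, U i) × (∀ j, V j))) (hs : Box.Logic U V s) :
    ∑ ω : (∀ i, U i) × (∀ j, V j),
      s.indicator (fun ω => u (ω.1 a) * v (ω.1 a')) ω = 0 := by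
  classical
  set δ : ((∀ i, U i) × (∀ j, V j)) → ℝ := fun ω => u (ω.1 a) * v (ω.1 a') with hδ
  have htot : ∑ ω : (∀ i, U i) × (∀ j, V j), δ ω = 0 := by
    rw [Fintype.sum_prod_type]
    have : ∀ x : ∀ i, U i, (∑ _y : ∀ j, V j, δ (x, _y)) =
        u (x a) * v (x a') * (Fintype.card (∀ j, V j) : ℝ) := by
      intro x
      simp [hδ, Finset.sum_const, Finset.card_univ, mul_comm]
    rw [Finset.sum_congr rfl fun x _ => this x]
    exact sum_left_zero haa u v hu hv _ (Or.inl (fun x y h => rfl))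
  induction hs with
  | empty => simp
  | atom c α b β =>
      have key : ∀ ω : (∀ i, U i) × (∀ j, V j),
          (Box.atom c α b β).indicator δ ω =
          (u (ω.1 a) * v (ω.1 a') * (if ω.1 c = α then 1 else 0)) *
            (if ω.2 b = β then 1 else 0) := by
        intro ω
        by_cases h1 : ω.1 c = α <;> by_cases h2 : ω.2 b = β <;>
          simp [Box.atom, Set.indicator, h1, h2, hδ]
      rw [Finset.sum_congr rfl fun ω _ => key ω, Fintype.sum_prod_type]
      have : ∀ x : ∀ i, U i,
          (∑ y : ∀ j, V j, (u (x a) * v (x a') * (if x c = α then 1 else 0)) *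
            (if y b = β then 1 else 0)) =
          u (x a) * v (x a') * ((if x c = α then 1 else 0) *
            (∑ y : ∀ j, V j, (if y b = β then (1:ℝ) else 0))) := by
        intro x
        rw [← Finset.mul_sum]; ring
      rw [Finset.sum_congr rfl fun x _ => this x]
      apply sum_left_zero haa u v hu hv
      by_cases hca : c = a
      · subst hca
        right
        intro x y h
        rw [h c haa]
      · left
        intro x y h
        rw [h c hca]
  | compl s hs ih =>
      have key : ∀ ω, sᶜ.indicator δ ω = δ ω - s.indicator δ ω := by
        intro ω
        by_cases h : ω ∈ s <;> simp [Set.indicator, h]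
      rw [Finset.sum_congr rfl fun ω _ => key ω, Finset.sum_sub_distrib, htot, ih]
      ring
  | iUnion n f hf hd ih =>
      have key : ∀ ω, (⋃ i, f i).indicator δ ω = ∑ i, (f i).indicator δ ω := by
        intro ω
        by_cases h : ω ∈ ⋃ i, f i
        · obtain ⟨i, hi⟩ := Set.mem_iUnion.mp h
          rw [Set.indicator_of_mem h]
          rw [Finset.sum_eq_single i]
          · rw [Set.indicator_of_mem hi]
          · intro j _ hj
            exact Set.indicator_of_notMem
              (fun hji => Set.disjoint_left.mp (hd j i hj) hji hi) δ
          · intro hi'; exact absurd (Finset.mem_univ i) hi'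
        · rw [Set.indicator_of_notMem h]
          symm
          apply Finset.sum_eq_zero
          intro i _
          exact Set.indicator_of_notMem (fun hfi => h (Set.mem_iUnion.mpr ⟨i, hfi⟩)) δ
      rw [Finset.sum_congr rfl fun ω _ => key ω, Finset.sum_comm]
      exact Finset.sum_eq_zero fun i _ => ih i

private lemma logic_locL' {N M : ℕ} (hM : 0 < M) {U : Fin N → Type} {V : Fin M → Type}
    [∀ i, Fintype (U i)] [∀ j, Fintype (V j)]
    (a : Fin N) (S : Set (U a)) : Box.Logic U V (Box.locL U V a S) := by
  classical
  set b : Fin M := ⟨0, hM⟩ with hb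
  set e := (Fintype.equivFin (U a × V b)).symm with he
  have hrep : Box.locL U V a S =
      ⋃ i : Fin (Fintype.card (U a × V b)),
        (if (e i).1 ∈ S then Box.atom a (e i).1 b (e i).2 else ∅) := by
    ext ω
    simp only [Set.mem_iUnion]
    constructor
    · intro hω
      refine ⟨e.symm (ω.1 a, ω.2 b), ?_⟩
      rw [Equiv.apply_symm_apply]
      split_ifs with h
      · exact ⟨rfl, rfl⟩
      · exact absurd hω h
    · rintro ⟨i, hi⟩
      by_cases h : (e i).1 ∈ S
      · rw [if_pos h] at hi
        show ω.1 a ∈ S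
        rw [hi.1]; exact h
      · rw [if_neg h] at hi; exact absurd hi (Set.notMem_empty ω)
  rw [hrep]
  apply Box.Logic.iUnion
  · intro i
    by_cases h : (e i).1 ∈ S
    · rw [if_pos h]; exact Box.Logic.atom _ _ _ _
    · rw [if_neg h]; exact Box.Logic.empty
  · intro i j hij
    by_cases hi : (e i).1 ∈ S
    · by_cases hj : (e j).1 ∈ S
      · rw [if_pos hi, if_pos hj]
        rw [Set.disjoint_left]
        intro ω hωi hωj
        apply hij
        apply e.injective
        have h1 : (e i).1 = (e j).1 := hωi.1.symm.trans hωj.1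
        have h2 : (e i).2 = (e j).2 := hωi.2.symm.trans hωj.2
        exact Prod.ext h1 h2
      · rw [if_neg hj]; exact Set.disjoint_empty _
    · rw [if_neg hi]; exact Set.empty_disjoint _

end Aux

theorem statement11 {N M : ℕ} (hN : 0 < N) (hM : 0 < M)
    (U : Fin N → Type) (V : Fin M → Type)
    [∀ a, Fintype (U a)] [∀ b, Fintype (V b)]
    (hU : ∀ a, 2 ≤ Fintype.card (U a)) (hV : ∀ b, 2 ≤ Fintype.card (V b))
    (a a' : Fin N) (P : Set (U a)) (Q : Set (U a'))
    (hP : P.Nonempty) (hPne : P ≠ Set.univ)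
    (hQ : Q.Nonempty) (hQne : Q ≠ Set.univ) :
    Box.Compatible U V (Box.locL U V a P) (Box.locL U V a' Q) ↔ a = a' := by
  classical
  haveI hUne : ∀ i, Nonempty (U i) := fun i =>
    Fintype.card_pos_iff.mp (by have := hU i; omega)
  haveI hVne : ∀ j, Nonempty (V j) := fun j =>
    Fintype.card_pos_iff.mp (by have := hV j; omega)
  constructor
  · intro hcomp
    by_contra hne
    obtain ⟨p₁, q₁, r, hp₁, hq₁, hr, d12, d1r, d2r, hpe, hqe⟩ := hcomp
    have hrpq : r = Box.locL U V a P ∩ Box.locL U V a' Q := by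
      ext ω
      constructor
      · intro hω
        constructor
        · rw [hpe]; exact Set.mem_union_right _ hω
        · rw [hqe]; exact Set.mem_union_right _ hω
      · rintro ⟨h1, h2⟩
        rw [hpe] at h1; rw [hqe] at h2
        rcases h1 with h1 | h1
        · rcases h2 with h2 | h2
          · exact absurd h2 (Set.disjoint_left.mp d12 h1)
          · exact absurd h2 (Set.disjoint_left.mp d1r h1)
        · exact h1
    rw [hrpq] at hr
    obtain ⟨α₀, hα₀⟩ := hP
    obtain ⟨α₁, hα₁⟩ : ∃ γ, γ ∉ P := by
      by_contra h; push_neg at h; exact hPne (Set.eq_univ_of_forall h)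
    obtain ⟨β₀, hβ₀⟩ := hQ
    obtain ⟨β₁, hβ₁⟩ : ∃ γ, γ ∉ Q := by
      by_contra h; push_neg at h; exact hQne (Set.eq_univ_of_forall h)
    have hαne : α₀ ≠ α₁ := fun h => hα₁ (h ▸ hα₀)
    have hβne : β₀ ≠ β₁ := fun h => hβ₁ (h ▸ hβ₀)
    set u : U a → ℝ :=
      fun γ => (if γ = α₀ then 1 else 0) - (if γ = α₁ then 1 else 0) with hu_def
    set v : U a' → ℝ :=
      fun γ => (if γ = β₀ then 1 else 0) - (if γ = β₁ then 1 else 0) with hv_def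
    have hu : ∑ γ, u γ = 0 := by
      simp [hu_def, Finset.sum_sub_distrib]
    have hv : ∑ γ, v γ = 0 := by
      simp [hv_def, Finset.sum_sub_distrib]
    have hzero := mu_logic_zero hne u v hu hv _ hr
    have huα₀ : u α₀ = 1 := by simp [hu_def, hαne]
    have hvβ₀ : v β₀ = 1 := by simp [hv_def, hβne]
    have hpos : 0 < ∑ ω : (∀ i, U i) × (∀ j, V j),
        (Box.locL U V a P ∩ Box.locL U V a' Q).indicator
          (fun ω => u (ω.1 a) * v (ω.1 a')) ω := by
      apply Finset.sum_pos'
      · intro ω _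
        by_cases h : ω ∈ Box.locL U V a P ∩ Box.locL U V a' Q
        · rw [Set.indicator_of_mem h]
          obtain ⟨h1, h2⟩ := h
          have e1 : u (ω.1 a) = if ω.1 a = α₀ then 1 else 0 := by
            have : ω.1 a ≠ α₁ := fun hh => hα₁ (hh ▸ h1)
            simp [hu_def, this]
          have e2 : v (ω.1 a') = if ω.1 a' = β₀ then 1 else 0 := by
            have : ω.1 a' ≠ β₁ := fun hh => hβ₁ (hh ▸ h2)
            simp [hv_def, this]
          rw [e1, e2]
          split_ifs <;> norm_num
        · rw [Set.indicator_of_notMem h]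
      · set x₀ : ∀ i, U i :=
          Function.update (Function.update (fun i => Classical.arbitrary (U i)) a α₀)
            a' β₀ with hx₀
        have hx₀a' : x₀ a' = β₀ := Function.update_self _ _ _
        have hx₀a : x₀ a = α₀ := by
          rw [hx₀, Function.update_of_ne hne, Function.update_self]
        set ω₀ : (∀ i, U i) × (∀ j, V j) :=
          (x₀, fun j => Classical.arbitrary (V j)) with hω₀
        refine ⟨ω₀, Finset.mem_univ _, ?_⟩
        have hmem : ω₀ ∈ Box.locL U V a P ∩ Box.locL U V a' Q := by
          constructor
          · show ω₀.1 a ∈ P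
            rw [show ω₀.1 = x₀ from rfl, hx₀a]; exact hα₀
          · show ω₀.1 a' ∈ Q
            rw [show ω₀.1 = x₀ from rfl, hx₀a']; exact hβ₀
        rw [Set.indicator_of_mem hmem]
        show 0 < u (x₀ a) * v (x₀ a')
        rw [hx₀a, hx₀a', huα₀, hvβ₀]
        norm_num
    linarith
  · intro heq
    subst heq
    refine ⟨Box.locL U V a (P \ Q), Box.locL U V a (Q \ P), Box.locL U V a (P ∩ Q),
      logic_locL' hM a _, logic_locL' hM a _, logic_locL' hM a _, ?_, ?_, ?_, ?_, ?_⟩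
    · rw [Set.disjoint_left]
      intro ω h1 h2
      exact h2.2 h1.1
    · rw [Set.disjoint_left]
      intro ω h1 h2
      exact h1.2 h2.2
    · rw [Set.disjoint_left]
      intro ω h1 h2
      exact h1.2 h2.1
    · ext ω
      simp only [Box.locL, Set.mem_setOf_eq, Set.mem_union, Set.mem_diff, Set.mem_inter_iff]
      tauto
    · ext ω
      simp only [Box.locL, Set.mem_setOf_eq, Set.mem_union, Set.mem_diff, Set.mem_inter_iff]
      tauto
end

section
/- Distinct Boolean blocks of the single-box logic overlap only in 0 and 𝟙: if P is a nonempty proper subset of U_a, P' is a nonempty proper subset of U_{a'}, and [a∈P,𝟙] = [a'∈P',𝟙], then a = a' and P = P'. -/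
theorem statement13 {N M : ℕ} (hN : 0 < N) (hM : 0 < M)
    (U : Fin N → Type) (V : Fin M → Type)
    [∀ a, Fintype (U a)] [∀ b, Fintype (V b)]
    (hU : ∀ a, 2 ≤ Fintype.card (U a)) (hV : ∀ b, 2 ≤ Fintype.card (V b))
    (a a' : Fin N) (P : Set (U a)) (P' : Set (U a'))
    (hP : P.Nonempty) (hPne : P ≠ Set.univ)
    (hP' : P'.Nonempty) (hP'ne : P' ≠ Set.univ)
    (h : Box.locL U V a P = Box.locL U V a' P') :
    a = a' ∧ HEq P P' := by
  have hUne : ∀ i, Nonempty (U i) := fun i =>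
    Fintype.card_pos_iff.mp (by have := hU i; omega)
  have hVne : ∀ j, Nonempty (V j) := fun j =>
    Fintype.card_pos_iff.mp (by have := hV j; omega)
  have x0 : ∀ i, U i := fun i => Classical.arbitrary _
  have y0 : ∀ j, V j := fun j => Classical.arbitrary _
  obtain ⟨α, hα⟩ := hP
  obtain ⟨α', hα'⟩ : ∃ α', α' ∉ P' := by
    by_contra hc; push_neg at hc; exact hP'ne (Set.eq_univ_of_forall hc)
  have haa : a = a' := by
    by_contra hne
    set x := Function.update (Function.update x0 a α) a' α' with hx
    have hxa : x a = α := by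
      simp [hx, Function.update_of_ne hne, Function.update_self]
    have hxa' : x a' = α' := by simp [hx]
    have hmem : (x, y0) ∈ Box.locL U V a P := by
      simp [Box.locL, hxa, hα]
    rw [h] at hmem
    exact hα' (by simpa [Box.locL, hxa'] using hmem)
  subst haa
  refine ⟨rfl, heq_of_eq ?_⟩
  ext β
  have hb : (Function.update x0 a β, y0) ∈ Box.locL U V a P ↔
      (Function.update x0 a β, y0) ∈ Box.locL U V a P' := by rw [h]
  simpa [Box.locL, Function.update_self] using hb
end

section
/- The set of states on ℒ is order determining: if p, q ∈ ℒ satisfy ρ(p) ≤ ρ(q) for every state ρ on ℒ, then p ⊆ q. -/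
theorem statement14 {N M : ℕ} (hN : 0 < N) (hM : 0 < M)
    (U : Fin N → Type) (V : Fin M → Type)
    [∀ a, Fintype (U a)] [∀ b, Fintype (V b)]
    (hU : ∀ a, 2 ≤ Fintype.card (U a)) (hV : ∀ b, 2 ≤ Fintype.card (V b))
    (p q : Set ((∀ i, U i) × (∀ j, V j)))
    (hp : Box.Logic U V p) (hq : Box.Logic U V q)
    (h : ∀ ρ : Box.State U V, ρ.val p ≤ ρ.val q) : p ⊆ q := by
  intro z hz
  classical
  set ρ : Box.State U V :=
    { val := fun s => if z ∈ s then 1 else 0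
      nonneg := by intro s _; split <;> norm_num
      le_one := by intro s _; split <;> norm_num
      normalized := by simp
      additive := by
        intro n f _ hd _
        by_cases hmem : z ∈ ⋃ i, f i
        · obtain ⟨_, ⟨i, rfl⟩, hi⟩ := hmem
          rw [if_pos (Set.mem_iUnion.2 ⟨i, hi⟩)]
          rw [Finset.sum_eq_single i]
          · rw [if_pos hi]
          · intro j _ hj
            rw [if_neg]
            exact fun hzj => (hd j i hj).le_bot ⟨hzj, hi⟩
          · intro hi'; exact absurd (Finset.mem_univ i) hi'
        · rw [if_neg hmem, Finset.sum_eq_zero]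
          intro i _
          rw [if_neg fun hzi => hmem (Set.mem_iUnion.2 ⟨i, hzi⟩)] } with hρ
  have := h ρ
  simp only [hρ, if_pos hz] at this
  by_contra hzq
  rw [if_neg hzq] at this
  norm_num at this
end
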